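/- Let 0 < m < n and let V, W ∈ G(n,m). Then there exist orthonormal bases {v₁,…,v_m} of V and {w₁,…,w_m} of W such that |v_i − w_i| ≤ C(n,m) · ‖π_V − π_W‖ for every 1 ≤ i ≤ m, where C(n,m) is a constant depending only on n and m. -/

import Mathlib

open MeasureTheory Metric Set Filter
open scoped ENNReal NNReal Topology

noncomputable section

/-- `ℝⁿ` with the Euclidean structure. -/
abbrev Euc (n : ℕ) : Type := EuclideanSpace ℝ (Fin n)

/-- The orthogonal projection onto a subspace `K ⊆ ℝⁿ`, viewed as a map `ℝⁿ → ℝⁿ`. -/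
def projCLM {n : ℕ} (K : Submodule ℝ (Euc n)) : Euc n →L[ℝ] Euc n :=
  K.subtypeL.comp (Submodule.orthogonalProjectionOnto K)

lemma projCLM_apply_mem {n : ℕ} (K : Submodule ℝ (Euc n)) (x : Euc n) : projCLM K x ∈ K :=
  (Submodule.orthogonalProjectionOnto K x).2

lemma projCLM_apply_of_mem {n : ℕ} {K : Submodule ℝ (Euc n)} {x : Euc n} (hx : x ∈ K) :
    projCLM K x = x := by
  have := (Submodule.starProjection_eq_self_iff (K := K) (v := x)).mpr hx
  exact this

lemma projCLM_injective {n : ℕ} : Function.Injective (projCLM (n := n)) := by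
  have key : ∀ A B : Submodule ℝ (Euc n), projCLM A = projCLM B → A ≤ B := by
    intro A B hAB x hx
    have h1 : projCLM A x = x := projCLM_apply_of_mem hx
    have h2 : projCLM B x ∈ B := projCLM_apply_mem B x
    rw [hAB] at h1
    rwa [h1] at h2
  intro A B h
  exact le_antisymm (key A B h) (key B A h.symm)

/-- The Grassmannian `G(k, m)` of `m`-dimensional linear subspaces of `ℝᵏ`. -/
def Grass (k m : ℕ) : Type := {V : Submodule ℝ (Euc k) // Module.finrank ℝ V = m}

/-- The metric `d_π(V, W) = ‖π_V - π_W‖` on the Grassmannian. -/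
instance {k m : ℕ} : MetricSpace (Grass k m) :=
  MetricSpace.induced (fun V => projCLM V.1)
    (fun V W h => Subtype.ext (projCLM_injective h)) inferInstance

instance {k m : ℕ} : MeasurableSpace (Grass k m) := borel _
instance {k m : ℕ} : BorelSpace (Grass k m) := ⟨rfl⟩

/-- The action of an orthogonal transformation of `ℝᵏ` on the Grassmannian. -/
def Grass.map {k m : ℕ} (f : Euc k ≃ₗᵢ[ℝ] Euc k) (V : Grass k m) : Grass k m :=
  ⟨V.1.map (f.toLinearEquiv : Euc k →ₗ[ℝ] Euc k),
    (LinearEquiv.finrank_map_eq _ _).trans V.2⟩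

/-- `γ_{k,m}` : the natural `O(k)`-invariant (probability) measure on `G(k,m)`. -/
def GHaarMeasure {k m : ℕ} (γ : Measure (Grass k m)) : Prop :=
  IsProbabilityMeasure γ ∧ ∀ f : Euc k ≃ₗᵢ[ℝ] Euc k, Measure.map (Grass.map f) γ = γ

/-- The subspace of `ℝⁿ` of vectors supported on the coordinates satisfying `p`. -/
def coordSub (n : ℕ) (p : Fin n → Prop) [DecidablePred p] : Submodule ℝ (Euc n) where
  carrier := {x | ∀ i, ¬ p i → x i = 0}
  add_mem' := by
    intro x y hx hy i hi
    show x i + y i = 0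
    rw [hx i hi, hy i hi, add_zero]
  zero_mem' := by intro i _; rfl
  smul_mem' := by
    intro c x hx i hi
    show c * x i = 0
    rw [hx i hi, mul_zero]

/-- `ℝ^{n-l} × {0}` inside `ℝⁿ`. -/
def lowS (n l : ℕ) : Submodule ℝ (Euc n) := coordSub n (fun i => (i : ℕ) < n - l)

/-- `{0} × ℝˡ` inside `ℝⁿ`. -/
def highS (n l : ℕ) : Submodule ℝ (Euc n) := coordSub n (fun i => ¬ ((i : ℕ) < n - l))

/-- The Grassmannian `G(n-l, m-l)`, realized as the family of `(m-l)`-dimensional subspaces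
`V` of `ℝ^{n-l} × {0} ⊆ ℝⁿ`. -/
def VGrass (n m l : ℕ) : Type :=
  {V : Submodule ℝ (Euc n) // V ≤ lowS n l ∧ Module.finrank ℝ V = m - l}

/-- The metric `d_π(V, W) = ‖π_V - π_W‖` on `G(n-l, m-l)`. -/
instance {n m l : ℕ} : MetricSpace (VGrass n m l) :=
  MetricSpace.induced (fun V => projCLM V.1)
    (fun V W h => Subtype.ext (projCLM_injective h)) inferInstance

instance {n m l : ℕ} : MeasurableSpace (VGrass n m l) := borel _
instance {n m l : ℕ} : BorelSpace (VGrass n m l) := ⟨rfl⟩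

/-- The `m`-dimensional subspace `𝕍 = V × ℝˡ` of `ℝⁿ`. -/
def vertSpan {n m l : ℕ} (V : VGrass n m l) : Submodule ℝ (Euc n) := V.1 ⊔ highS n l

/-- `B_𝕍 = π_𝕍(B)`, the image of `B` under the orthogonal projection onto `𝕍 = V × ℝˡ`. -/
def projIm {n m l : ℕ} (V : VGrass n m l) (B : Set (Euc n)) : Set (Euc n) :=
  (projCLM (vertSpan V)) '' B

/-- The action on `G(n-l,m-l)` of an orthogonal transformation of `ℝⁿ` preserving
`ℝ^{n-l} × {0}`. -/
def VGrass.map {n m l : ℕ} (f : Euc n ≃ₗᵢ[ℝ] Euc n)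
    (hf : ∀ x ∈ lowS n l, f x ∈ lowS n l) (V : VGrass n m l) : VGrass n m l :=
  ⟨V.1.map (f.toLinearEquiv : Euc n →ₗ[ℝ] Euc n),
    ⟨Submodule.map_le_iff_le_comap.mpr (fun x hx => hf x (V.2.1 hx)),
     (LinearEquiv.finrank_map_eq _ _).trans V.2.2⟩⟩

/-- `γ_{n-l,m-l}` : the natural `O(n-l)`-invariant (probability) measure on `G(n-l,m-l)`,
where `O(n-l)` is realized as the group of orthogonal transformations of `ℝⁿ` fixing
`{0} × ℝˡ` pointwise and preserving `ℝ^{n-l} × {0}`. -/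
def VHaarMeasure {n m l : ℕ} (γ : Measure (VGrass n m l)) : Prop :=
  IsProbabilityMeasure γ ∧
    ∀ (f : Euc n ≃ₗᵢ[ℝ] Euc n) (_ : ∀ x ∈ highS n l, f x = x)
      (hf : ∀ x ∈ lowS n l, f x ∈ lowS n l),
      Measure.map (VGrass.map f hf) γ = γ

/-- `N(E, δ)`: the least number of closed `δ`-balls needed to cover `E` (`∞` if there
is no finite cover). -/
def covN {X : Type*} [PseudoMetricSpace X] (E : Set X) (δ : ℝ) : ℝ≥0∞ :=
  ⨅ (S : Finset X) (_ : E ⊆ ⋃ x ∈ S, closedBall x δ), (S.card : ℝ≥0∞)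

/-- `log N(E,δ) / (-log δ)`, the ratio appearing in the definition of box dimensions. -/
def boxRatio {X : Type*} [PseudoMetricSpace X] (E : Set X) (δ : ℝ) : ℝ≥0∞ :=
  if covN E δ = ⊤ then ⊤
  else ENNReal.ofReal (Real.log ((covN E δ).toReal) / -Real.log δ)

/-- Upper box (Minkowski) dimension. -/
def ubDim {X : Type*} [PseudoMetricSpace X] (E : Set X) : ℝ≥0∞ :=
  limsup (boxRatio E) (𝓝[>] (0 : ℝ))

/-- Lower box (Minkowski) dimension. -/
def lbDim {X : Type*} [PseudoMetricSpace X] (E : Set X) : ℝ≥0∞ :=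
  liminf (boxRatio E) (𝓝[>] (0 : ℝ))

/-- Packing dimension. -/
def packDim {X : Type*} [PseudoMetricSpace X] (E : Set X) : ℝ≥0∞ :=
  ⨅ (F : ℕ → Set X) (_ : E ⊆ ⋃ j, F j), ⨆ j, ubDim (F j)

/-- Modified lower box dimension. -/
def mlbDim {X : Type*} [PseudoMetricSpace X] (E : Set X) : ℝ≥0∞ :=
  ⨅ (F : ℕ → Set X) (_ : E ⊆ ⋃ j, F j), ⨆ j, lbDim (F j)

/-- The `s`-energy `I_s(μ) = ∬ |x-y|^{-s} dμ(x) dμ(y)` of a measure. -/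
def energy {X : Type*} [MeasurableSpace X] [PseudoEMetricSpace X] (μ : Measure X) (s : ℝ) :
    ℝ≥0∞ :=
  ∫⁻ x, ∫⁻ y, edist x y ^ (-s) ∂μ ∂μ

/-- The (closed) support `spt μ` of a measure. -/
def measSupport {X : Type*} [PseudoMetricSpace X] [MeasurableSpace X] (μ : Measure X) :
    Set X :=
  {x | ∀ r : ℝ, 0 < r → 0 < μ (ball x r)}

/-- The convolution `μ ∗ g` of a measure with a function: `(μ ∗ g)(x) = ∫ g(x-y) dμ(y)`. -/
def mconv {n : ℕ} (μ : Measure (Euc n)) (g : Euc n → ℝ) (x : Euc n) : ℝ :=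
  ∫ y, g (x - y) ∂μ

/-- The mollification `g_δ(x) = δ^{-d} g(x/δ)`. -/
def moll {n : ℕ} (d : ℕ) (g : Euc n → ℝ) (δ : ℝ) (x : Euc n) : ℝ :=
  (δ ^ d)⁻¹ * g (δ⁻¹ • x)

/-- The dyadic discretization `μ^δ = ∑_{Q ∈ 𝒟_δ} (μ(Q)/δⁿ) χ_Q` of a measure on `ℝⁿ`. -/
def dyDensity {n : ℕ} (μ : Measure (Euc n)) (δ : ℝ) (x : Euc n) : ℝ :=
  (μ {y | ∀ i, Int.floor (y i / δ) = Int.floor (x i / δ)}).toReal / δ ^ n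

/-- The dyadic cube of side length `δ` indexed by `k ∈ ℤ^d`. -/
def dyCube (d : ℕ) (δ : ℝ) (k : Fin d → ℤ) : Set (Euc d) :=
  {x | ∀ i, δ * k i ≤ x i ∧ x i < δ * (k i + 1)}

/-- The `d`-dimensional Hausdorff measure, normalized (by the isodiametric constant
`ω_d / 2^d`) so that on `d`-dimensional affine subspaces it coincides with Lebesgue
measure. -/
def euclHaus (X : Type*) [EMetricSpace X] [MeasurableSpace X] [BorelSpace X] (d : ℕ) :
    Measure X :=
  (ENNReal.ofReal (Real.sqrt Real.pi ^ d / (2 ^ d * Real.Gamma ((d : ℝ) / 2 + 1)))) •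
    MeasureTheory.Measure.hausdorffMeasure (d : ℝ)

/-- The fiber integral `x ↦ ∫_{π_𝕍^{-1}{x}} f dℋ^{n-m}`; this is the density of the
pushforward `π_{𝕍♯}(f · vol)` and, applied to `f = Ψ`, the projection `Ψ_𝕍`. -/
def fiberIntegral {n m l : ℕ} (V : VGrass n m l) (f : Euc n → ℝ) (x : Euc n) : ℝ :=
  ∫ y, f y ∂((euclHaus (Euc n) (n - m)).restrict ((projCLM (vertSpan V)) ⁻¹' {x}))

/-- The squared `L²(𝕍)`-norm of the density of the pushforward `π_{𝕍♯}(f · vol)`. -/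
def projL2sq {n m l : ℕ} (V : VGrass n m l) (f : Euc n → ℝ) : ℝ≥0∞ :=
  ∫⁻ x, ENNReal.ofReal ((fiberIntegral V f x) ^ 2)
    ∂((euclHaus (Euc n) m).restrict (vertSpan V : Set (Euc n)))

/-- A `δ`-separated set in a metric space. -/
def sep {X : Type*} [PseudoMetricSpace X] (δ : ℝ) (E : Set X) : Prop :=
  ∀ x ∈ E, ∀ y ∈ E, x ≠ y → δ ≤ dist x y

/-- A `(δ, m)`-set with constant `C₀`: a `δ`-separated subset of `B(0,1) ⊆ ℝⁿ` such that
every ball of radius `r ≥ δ` contains at most `C₀ (r/δ)^m` of its points. -/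
def IsDeltaMSet (n : ℕ) (C₀ δ : ℝ) (m : ℕ) (C : Finset (Euc n)) : Prop :=
  (C : Set (Euc n)) ⊆ closedBall 0 1 ∧ sep δ (C : Set (Euc n)) ∧
    ∀ (x : Euc n) (r : ℝ), δ ≤ r →
      (((C : Set (Euc n)) ∩ closedBall x r).ncard : ℝ) ≤ C₀ * (r / δ) ^ m

/-- `Λ_m ℝⁿ`, the space of `m`-vectors over `ℝⁿ` with its natural inner product: the
coordinate model in which the wedge products of the standard basis vectors form an
orthonormal basis. -/
abbrev Lam (n m : ℕ) : Type := EuclideanSpace ℝ {s : Finset (Fin n) // s.card = m}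

/-- The simple `m`-vector `v₁ ∧ ⋯ ∧ v_m`, in coordinates (Plücker coordinates): its
`I`-th coordinate is `det (v_i(a_j))_{ij}` where `a₁ < ⋯ < a_m` enumerates `I`. -/
def wedge {n m : ℕ} (v : Fin m → Euc n) : Lam n m :=
  (WithLp.equiv 2 ({s : Finset (Fin n) // s.card = m} → ℝ)).symm
    (fun I => Matrix.det (Matrix.of fun i j => v i ((I.1.orderIsoOfFin I.2 j : Fin n))))

end

open scoped RealInnerProductSpace

section AuxCloseBases

/-- If `m` orthonormal vectors lie in a subspace of rank `m`, their span is that subspace. -/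
lemma aux_span_eq_of_orthonormal {n m : ℕ} {K : Submodule ℝ (Euc n)}
    (hK : Module.finrank ℝ K = m) {v : Fin m → Euc n} (hv : Orthonormal ℝ v)
    (hmem : ∀ i, v i ∈ K) : Submodule.span ℝ (Set.range v) = K := by
  have hle : Submodule.span ℝ (Set.range v) ≤ K := by
    rw [Submodule.span_le]; rintro x ⟨i, rfl⟩; exact hmem i
  refine Submodule.eq_of_le_of_finrank_le hle ?_
  rw [finrank_span_eq_card hv.linearIndependent, Fintype.card_fin, hK]

/-- Every rank-`m` subspace of `ℝⁿ` admits an orthonormal basis of `m` vectors. -/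
lemma aux_exists_onb {n m : ℕ} (K : Submodule ℝ (Euc n)) (hK : Module.finrank ℝ K = m) :
    ∃ v : Fin m → Euc n, Orthonormal ℝ v ∧ (∀ i, v i ∈ K) ∧
      Submodule.span ℝ (Set.range v) = K := by
  let b := (stdOrthonormalBasis ℝ K).reindex (finCongr hK)
  have hon : Orthonormal ℝ (fun i => ((b i : K) : Euc n)) := by
    have hb := b.orthonormal
    rw [orthonormal_iff_ite] at hb ⊢
    intro i j
    simpa [Submodule.coe_inner] using hb i j
  exact ⟨_, hon, fun i => (b i).2, aux_span_eq_of_orthonormal hK hon (fun i => (b i).2)⟩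

end AuxCloseBases

set_option maxHeartbeats 2000000 in
/-- **Lemma (close orthonormal bases for close subspaces).** Let `0 < m < n` and
`V, W ∈ G(n,m)`. Then there exist orthonormal bases `{v₁,…,v_m}` of `V` and
`{w₁,…,w_m}` of `W` with `|vᵢ - wᵢ| ≤ C(n,m) ‖π_V - π_W‖` for all `1 ≤ i ≤ m`, where
the constant `C(n,m)` depends only on `n` and `m`. -/
theorem exists_close_orthonormal_bases
    (n m : ℕ) (h0m : 0 < m) (hmn : m < n) :
    ∃ C : ℝ, 0 < C ∧
      ∀ V W : Grass n m, ∃ v w : Fin m → Euc n,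
        Orthonormal ℝ v ∧ Orthonormal ℝ w ∧
        (∀ i, v i ∈ V.1) ∧ (∀ i, w i ∈ W.1) ∧
        Submodule.span ℝ (Set.range v) = V.1 ∧
        Submodule.span ℝ (Set.range w) = W.1 ∧
        ∀ i, ‖v i - w i‖ ≤ C * ‖projCLM V.1 - projCLM W.1‖ := by
  classical
  haveI : NeZero m := ⟨h0m.ne'⟩
  haveI : WellFoundedLT (Fin m) := inferInstance
  refine ⟨8 * 10 ^ m, by positivity, fun V W => ?_⟩
  obtain ⟨v, hv, hvV, hvspan⟩ := aux_exists_onb V.1 V.2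
  set ε : ℝ := ‖projCLM V.1 - projCLM W.1‖ with hεdef
  have hε0 : (0:ℝ) ≤ ε := norm_nonneg _
  have hpow1 : (1:ℝ) ≤ 10 ^ m := one_le_pow₀ (by norm_num)
  have hpowpos : (0:ℝ) < 10 ^ m := by positivity
  by_cases hcase : 1 / (4 * 10 ^ m) ≤ ε
  · obtain ⟨w, hw, hwW, hwspan⟩ := aux_exists_onb W.1 W.2
    refine ⟨v, w, hv, hw, hvV, hwW, hvspan, hwspan, fun i => ?_⟩
    have h2 : (2:ℝ) = 8 * 10 ^ m * (1 / (4 * 10 ^ m)) := by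
      field_simp
      ring
    calc ‖v i - w i‖ ≤ ‖v i‖ + ‖w i‖ := norm_sub_le _ _
      _ = 2 := by rw [hv.1 i, hw.1 i]; norm_num
      _ ≤ 8 * 10 ^ m * ε := by
          rw [h2]; exact mul_le_mul_of_nonneg_left hcase (by positivity)
  · push_neg at hcase
    have hkey : (10:ℝ) ^ m * ε ≤ 1 / 4 := by
      have h4 := (lt_div_iff₀ (by positivity : (0:ℝ) < 4 * 10 ^ m)).mp hcase
      nlinarith
    have hε4 : ε ≤ 1 / 4 := by nlinarith
    obtain ⟨u, hudef⟩ : ∃ u : Fin m → Euc n, u = fun i => projCLM W.1 (v i) := ⟨fun i => projCLM W.1 (v i), rfl⟩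
    have huW : ∀ i, u i ∈ W.1 := fun i => hudef ▸ projCLM_apply_mem _ _
    have huv : ∀ i, ‖u i - v i‖ ≤ ε := by
      intro i
      have h1 : u i - v i = (projCLM W.1 - projCLM V.1) (v i) := by
        rw [hudef]
        simp [projCLM_apply_of_mem (hvV i)]
      rw [h1]
      calc ‖(projCLM W.1 - projCLM V.1) (v i)‖
          ≤ ‖projCLM W.1 - projCLM V.1‖ * ‖v i‖ := ContinuousLinearMap.le_opNorm _ _
        _ = ε := by rw [hv.1 i, mul_one, norm_sub_rev]
    have hu_close : ∀ i, |‖u i‖ - 1| ≤ ε := by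
      intro i
      have h := abs_norm_sub_norm_le (u i) (v i)
      rw [hv.1 i] at h
      exact h.trans (huv i)
    have hu_ub : ∀ i, ‖u i‖ ≤ 1 + ε := fun i => by
      have := (abs_le.mp (hu_close i)).2; linarith
    have hu_lb : ∀ i, 1 - ε ≤ ‖u i‖ := fun i => by
      have := (abs_le.mp (hu_close i)).1; linarith
    have hinner : ∀ i j : Fin m, i ≠ j → |⟪u i, u j⟫| ≤ 3 * ε := by
      intro i j hij
      have hexp : ⟪u i, u j⟫
          = ⟪v i, v j⟫ + ⟪v i, u j - v j⟫ + ⟪u i - v i, v j⟫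
            + ⟪u i - v i, u j - v j⟫ := by
        simp only [inner_sub_left, inner_sub_right]
        ring
      have h0 : ⟪v i, v j⟫ = 0 := hv.2 hij
      have ha : |⟪v i, u j - v j⟫| ≤ 1 * ε := by
        have := abs_real_inner_le_norm (v i) (u j - v j)
        rw [hv.1 i] at this
        exact this.trans (by nlinarith [huv j])
      have hb : |⟪u i - v i, v j⟫| ≤ ε * 1 := by
        have := abs_real_inner_le_norm (u i - v i) (v j)
        rw [hv.1 j] at this
        exact this.trans (by nlinarith [huv i])
      have hc : |⟪u i - v i, u j - v j⟫| ≤ ε * ε := by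
        have := abs_real_inner_le_norm (u i - v i) (u j - v j)
        exact this.trans (mul_le_mul (huv i) (huv j) (norm_nonneg _) hε0)
      rw [hexp, h0, zero_add]
      calc |⟪v i, u j - v j⟫ + ⟪u i - v i, v j⟫ + ⟪u i - v i, u j - v j⟫|
          ≤ |⟪v i, u j - v j⟫| + |⟪u i - v i, v j⟫| + |⟪u i - v i, u j - v j⟫| :=
            (abs_add_le _ _).trans (by gcongr; exact abs_add_le _ _)
        _ ≤ 3 * ε := by nlinarith
    obtain ⟨g, hgdef⟩ : ∃ g : Fin m → Euc n, g = InnerProductSpace.gramSchmidt ℝ u := ⟨InnerProductSpace.gramSchmidt ℝ u, rfl⟩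
    -- helper facts under the inductive bound
    have hpow_le : ∀ i : Fin m, (10:ℝ) ^ (i:ℕ) ≤ 10 ^ m :=
      fun i => pow_le_pow_right₀ (by norm_num) i.2.le
    have hpow1' : ∀ i : Fin m, (1:ℝ) ≤ 10 ^ (i:ℕ) := fun i => one_le_pow₀ (by norm_num)
    have hquarter : ∀ i : Fin m, ‖g i - u i‖ ≤ (10 ^ (i:ℕ) - 1) * ε → ‖g i - u i‖ ≤ 1 / 4 :=
      fun i h => h.trans (by nlinarith [hpow_le i])
    have hhalf : ∀ i : Fin m, ‖g i - u i‖ ≤ (10 ^ (i:ℕ) - 1) * ε → 1 / 2 ≤ ‖g i‖ := by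
      intro i h
      have h4 := hquarter i h
      have h2 : |‖g i‖ - ‖u i‖| ≤ ‖g i - u i‖ := abs_norm_sub_norm_le _ _
      have := (abs_le.mp h2).1
      have := hu_lb i
      linarith
    -- the inductive step
    have step : ∀ i : Fin m,
        (∀ j : Fin m, j < i → ‖g j - u j‖ ≤ (10 ^ (j:ℕ) - 1) * ε) →
        ‖g i - u i‖ ≤ (10 ^ (i:ℕ) - 1) * ε := by
      intro i IH
      have hdef := InnerProductSpace.gramSchmidt_def'' ℝ u i
      rw [← hgdef] at hdef
      have hsub : u i - g i
          = ∑ j ∈ Finset.Iio i, (⟪g j, u i⟫ / (‖g j‖ : ℝ) ^ 2) • g j :=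
        sub_eq_iff_eq_add'.mpr hdef
      have hterm : ∀ j ∈ Finset.Iio i,
          ‖(⟪g j, u i⟫ / (‖g j‖ : ℝ) ^ 2) • g j‖ ≤ 6 * 10 ^ (j:ℕ) * ε := by
        intro j hj
        have hji : j < i := Finset.mem_Iio.mp hj
        have hIH := IH j hji
        have hgj : 1 / 2 ≤ ‖g j‖ := hhalf j hIH
        have hgj0 : (0:ℝ) < ‖g j‖ := by linarith
        have hinner2 : |⟪g j, u i⟫| ≤ (3/2) * ((10 ^ (j:ℕ) - 1) * ε) + 3 * ε := by
          have hsplit : ⟪g j, u i⟫ = ⟪g j - u j, u i⟫ + ⟪u j, u i⟫ := by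
            rw [inner_sub_left]; ring
          have h1 : |⟪g j - u j, u i⟫| ≤ ‖g j - u j‖ * ‖u i‖ :=
            abs_real_inner_le_norm _ _
          have h2 : |⟪u j, u i⟫| ≤ 3 * ε := hinner j i hji.ne
          have hui : ‖u i‖ ≤ 3/2 := (hu_ub i).trans (by linarith)
          have h3 : ‖g j - u j‖ * ‖u i‖ ≤ ((10 ^ (j:ℕ) - 1) * ε) * (3/2) := by
            apply mul_le_mul hIH hui (norm_nonneg _)
            nlinarith [hpow1' j]
          calc |⟪g j, u i⟫| = |⟪g j - u j, u i⟫ + ⟪u j, u i⟫| := by rw [← hsplit]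
            _ ≤ |⟪g j - u j, u i⟫| + |⟪u j, u i⟫| := abs_add_le _ _
            _ ≤ (3/2) * ((10 ^ (j:ℕ) - 1) * ε) + 3 * ε := by nlinarith
        have hnt : ‖(⟪g j, u i⟫ / (‖g j‖ : ℝ) ^ 2) • g j‖ = |⟪g j, u i⟫| / ‖g j‖ := by
          rw [norm_smul, Real.norm_eq_abs, abs_div, abs_of_nonneg (by positivity : (0:ℝ) ≤ ‖g j‖ ^ 2)]
          field_simp
        rw [hnt]
        have hd : |⟪g j, u i⟫| / ‖g j‖ ≤ 2 * |⟪g j, u i⟫| := by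
          rw [div_le_iff₀ hgj0]
          nlinarith [abs_nonneg (⟪g j, u i⟫)]
        calc |⟪g j, u i⟫| / ‖g j‖ ≤ 2 * |⟪g j, u i⟫| := hd
          _ ≤ 2 * ((3/2) * ((10 ^ (j:ℕ) - 1) * ε) + 3 * ε) := by linarith
          _ ≤ 6 * 10 ^ (j:ℕ) * ε := by nlinarith [hpow1' j]
      have hsum : ∑ j ∈ Finset.Iio i, (6:ℝ) * 10 ^ (j:ℕ) * ε
          = 6 * (∑ k ∈ Finset.range (i:ℕ), (10:ℝ) ^ k) * ε := by
        rw [Finset.mul_sum, Finset.sum_mul]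
        rw [← Nat.Iio_eq_range, ← Fin.map_valEmbedding_Iio, Finset.sum_map]
        rfl
      have hgeom : (∑ k ∈ Finset.range (i:ℕ), (10:ℝ) ^ k) = (10 ^ (i:ℕ) - 1) / 9 := by
        rw [geom_sum_eq (by norm_num : (10:ℝ) ≠ 1)]
        norm_num
      calc ‖g i - u i‖ = ‖u i - g i‖ := norm_sub_rev _ _
        _ = ‖∑ j ∈ Finset.Iio i, (⟪g j, u i⟫ / (‖g j‖ : ℝ) ^ 2) • g j‖ := by rw [hsub]
        _ ≤ ∑ j ∈ Finset.Iio i, ‖(⟪g j, u i⟫ / (‖g j‖ : ℝ) ^ 2) • g j‖ :=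
            norm_sum_le _ _
        _ ≤ ∑ j ∈ Finset.Iio i, (6:ℝ) * 10 ^ (j:ℕ) * ε := Finset.sum_le_sum hterm
        _ = 6 * ((10 ^ (i:ℕ) - 1) / 9) * ε := by rw [hsum, hgeom]
        _ ≤ (10 ^ (i:ℕ) - 1) * ε := by nlinarith [hpow1' i]
    have key : ∀ i : Fin m, ‖g i - u i‖ ≤ (10 ^ (i:ℕ) - 1) * ε := by
      have main : ∀ k : ℕ, ∀ i : Fin m, (i:ℕ) ≤ k → ‖g i - u i‖ ≤ (10 ^ (i:ℕ) - 1) * ε := by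
        intro k
        induction k with
        | zero =>
          intro i hi
          refine step i (fun j hj => absurd ?_ (Nat.not_lt_zero (j:ℕ)))
          exact lt_of_lt_of_le (Fin.lt_iff_val_lt_val.mp hj) hi
        | succ k IHk =>
          intro i hi
          refine step i (fun j hj => IHk j ?_)
          have := Fin.lt_iff_val_lt_val.mp hj
          omega
      exact fun i => main m i i.2.le
    have hglb : ∀ i, 1 / 2 ≤ ‖g i‖ := fun i => hhalf i (key i)
    have hgpos : ∀ i, (0:ℝ) < ‖g i‖ := fun i => lt_of_lt_of_le (by norm_num) (hglb i)
    have hgne0 : ∀ i, ‖g i‖ ≠ 0 := fun i => (hgpos i).ne'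
    obtain ⟨w, hwdef⟩ : ∃ w : Fin m → Euc n, w = fun i => (‖g i‖)⁻¹ • g i := ⟨fun i => (‖g i‖)⁻¹ • g i, rfl⟩
    have hw : Orthonormal ℝ w := by
      rw [orthonormal_iff_ite]
      intro i j
      by_cases hij : i = j
      · subst hij
        rw [hwdef, if_pos rfl]
        simp only [real_inner_smul_left, real_inner_smul_right]
        rw [real_inner_self_eq_norm_mul_norm]
        field_simp [hgne0 i]
      · have horth : ⟪g i, g j⟫ = 0 := by
          have := InnerProductSpace.gramSchmidt_orthogonal ℝ u (hij : i ≠ j)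
          rwa [← hgdef] at this
        rw [hwdef, if_neg hij]
        simp only [real_inner_smul_left, real_inner_smul_right, horth, mul_zero]
    have hwW : ∀ i, w i ∈ W.1 := by
      intro i
      have hg : g i ∈ W.1 := by
        have h1 : g i ∈ Submodule.span ℝ (u '' Set.Iic i) := by
          have := InnerProductSpace.gramSchmidt_mem_span ℝ u (le_refl i)
          rwa [← hgdef] at this
        have h2 : Submodule.span ℝ (u '' Set.Iic i) ≤ W.1 := by
          rw [Submodule.span_le]; rintro x ⟨j, -, rfl⟩; exact huW j
        exact h2 h1
      rw [hwdef]
      exact Submodule.smul_mem _ _ hg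
    have hwspan := aux_span_eq_of_orthonormal W.2 hw hwW
    refine ⟨v, w, hv, hw, hvV, hwW, hvspan, hwspan, fun i => ?_⟩
    have h1 : ‖u i - v i‖ ≤ ε := huv i
    have h2 : ‖g i - u i‖ ≤ (10 ^ (i:ℕ) - 1) * ε := key i
    have h3 : ‖w i - g i‖ ≤ (10 ^ (i:ℕ) - 1) * ε + ε := by
      have he : w i - g i = ((‖g i‖)⁻¹ - 1) • g i := by
        rw [hwdef, sub_smul, one_smul]
      rw [he, norm_smul, Real.norm_eq_abs]
      have habs : |(‖g i‖)⁻¹ - 1| * ‖g i‖ = |1 - ‖g i‖| := by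
        calc |(‖g i‖)⁻¹ - 1| * ‖g i‖ = |(‖g i‖)⁻¹ - 1| * |‖g i‖| := by
              rw [abs_of_pos (hgpos i)]
          _ = |((‖g i‖)⁻¹ - 1) * ‖g i‖| := (abs_mul _ _).symm
          _ = |1 - ‖g i‖| := by rw [sub_mul, inv_mul_cancel₀ (hgne0 i), one_mul]
      rw [habs]
      have ha : |‖g i‖ - ‖u i‖| ≤ ‖g i - u i‖ := abs_norm_sub_norm_le _ _
      have hb := hu_close i
      calc |1 - ‖g i‖| = |‖g i‖ - 1| := abs_sub_comm _ _
        _ ≤ |‖g i‖ - ‖u i‖| + |‖u i‖ - 1| := abs_sub_le _ _ _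
        _ ≤ (10 ^ (i:ℕ) - 1) * ε + ε := add_le_add (ha.trans h2) hb
    have htri := dist_triangle4 (v i) (u i) (g i) (w i)
    rw [dist_eq_norm, dist_eq_norm, dist_eq_norm, dist_eq_norm] at htri
    rw [norm_sub_rev (v i) (u i), norm_sub_rev (u i) (g i), norm_sub_rev (g i) (w i)] at htri
    calc ‖v i - w i‖ ≤ ‖u i - v i‖ + ‖g i - u i‖ + ‖w i - g i‖ := htri
      _ ≤ ε + (10 ^ (i:ℕ) - 1) * ε + ((10 ^ (i:ℕ) - 1) * ε + ε) := by linarith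
      _ ≤ 8 * 10 ^ m * ε := by nlinarith [hpow_le i, hpow1' i]
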